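/- Suppose gcd(N, p) = 1. Then the image of S₀(n,N) under reduction modulo p is all of GL(n, ℤ/pℤ): for every matrix ḡ ∈ GL(n, ℤ/pℤ) there exists s ∈ S₀(n,N) with s ≡ ḡ (mod p). -/

import Mathlib

/-!
By the Chinese remainder theorem, `g` lifts to an integer matrix that is congruent to `g`
modulo `p` and to the identity modulo `N`; its determinant is then prime to `pN` and its first
row is `(1,0,…,0)` modulo `N`. Scaling the first row by some `c ≡ 1 (mod pN)` with the sign of
the determinant makes the determinant positive without changing the matrix modulo `pN`.
-/

open Matrix

/-- `S₀(n,N)`: integer matrices with positive determinant relatively prime to `pN`,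
whose first row is `≡ (∗,0,…,0) (mod N)`. -/
def S0 (p N : ℕ) {n : ℕ} : Set (Matrix (Fin (n + 1)) (Fin (n + 1)) ℤ) :=
  {s | 0 < s.det ∧ Int.gcd s.det (p * N) = 1 ∧ ∀ j : Fin (n + 1), j ≠ 0 → (N : ℤ) ∣ s 0 j}

theorem Int.exists_intCast_eq_of_coprime {p N : ℕ} (h : N.Coprime p) (x : ZMod p)
    (y : ZMod N) : ∃ z : ℤ, (z : ZMod p) = x ∧ (z : ZMod N) = y := by
  obtain ⟨a, b, hab⟩ := Nat.isCoprime_iff_coprime.mpr h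
  refine ⟨a * N * ZMod.cast x + b * p * ZMod.cast y, ?_, ?_⟩
  · have haN : (a * N : ZMod p) = 1 := by
      simpa using congrArg (Int.cast : ℤ → ZMod p) hab
    simp [haN]
  · have hbp : (b * p : ZMod N) = 1 := by
      simpa using congrArg (Int.cast : ℤ → ZMod N) hab
    simp [hbp]

theorem Matrix.exists_map_intCast_eq_of_coprime {ι : Type*} {p N : ℕ} (h : N.Coprime p)
    (A : Matrix ι ι (ZMod p)) (B : Matrix ι ι (ZMod N)) :
    ∃ s : Matrix ι ι ℤ, s.map (Int.cast : ℤ → ZMod p) = A ∧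
      s.map (Int.cast : ℤ → ZMod N) = B := by
  choose f hfA hfB using fun i j => Int.exists_intCast_eq_of_coprime h (A i j) (B i j)
  exact ⟨Matrix.of f, by ext; simp [hfA], by ext; simp [hfB]⟩

theorem Matrix.map_updateRow_smul_of_intCast_eq_one {ι R : Type*} [DecidableEq ι] [Ring R]
    (s : Matrix ι ι ℤ) (i : ι) {c : ℤ} (hc : (c : R) = 1) :
    (s.updateRow i (c • s i)).map (Int.cast : ℤ → R) = s.map Int.cast := by
  ext k j
  rcases eq_or_ne k i with rfl | hk
  · simp [hc]
  · simp [updateRow_ne hk]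

theorem Int.exists_modEq_one_mul_pos {m d : ℤ} (hm : m ≠ 0) (hd : d ≠ 0) :
    ∃ c, c ≡ 1 [ZMOD m] ∧ 0 < c * d := by
  rcases hd.lt_or_gt with hneg | hpos
  · refine ⟨1 - 2 * m * m, Int.modEq_iff_dvd.2 ⟨2 * m, by ring⟩, ?_⟩
    nlinarith [mul_self_pos.2 hm]
  · exact ⟨1, Int.ModEq.refl 1, by simpa⟩

theorem Int.isCoprime_of_modEq_one {c m : ℤ} (h : c ≡ 1 [ZMOD m]) : IsCoprime c m := by
  obtain ⟨k, hk⟩ := Int.modEq_iff_dvd.1 h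
  exact ⟨1, k, by linarith⟩

/-- if `gcd(N,p) = 1` then reduction mod `p` maps `S₀(n,N)` onto
`GL(n, ℤ/pℤ)`. -/
theorem stmt7 (p : ℕ) (hp : p.Prime) (n N : ℕ) (hN : 0 < N) (hNp : Nat.gcd N p = 1)
    (g : Matrix (Fin (n + 1)) (Fin (n + 1)) (ZMod p)) (hg : IsUnit g.det) :
    ∃ s : Matrix (Fin (n + 1)) (Fin (n + 1)) ℤ,
      s ∈ S0 p N ∧ s.map (Int.cast : ℤ → ZMod p) = g := by
  obtain ⟨s₀, hs₀p, hs₀N⟩ := exists_map_intCast_eq_of_coprime hNp g 1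
  have hdet_p : IsCoprime (p : ℤ) s₀.det :=
    (ZMod.coe_int_isUnit_iff_isCoprime _ _).1 (by rwa [Int.cast_det, hs₀p])
  have hdet_N : IsCoprime (N : ℤ) s₀.det :=
    (ZMod.coe_int_isUnit_iff_isCoprime _ _).1 (by simp [Int.cast_det, hs₀N])
  have hdet_ne : s₀.det ≠ 0 := by
    rintro h
    rw [h, isCoprime_zero_right] at hdet_p
    exact (Nat.prime_iff_prime_int.mp hp).not_isUnit hdet_p
  obtain ⟨c, hc, hcd⟩ := Int.exists_modEq_one_mul_pos (m := p * N)
    (mul_ne_zero (mod_cast hp.ne_zero) (mod_cast hN.ne')) hdet_ne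
  have hdet : (s₀.updateRow 0 (c • s₀ 0)).det = c * s₀.det := by
    rw [det_updateRow_smul, updateRow_eq_self]
  refine ⟨s₀.updateRow 0 (c • s₀ 0), ⟨hdet ▸ hcd, ?_, fun j hj => ?_⟩, ?_⟩
  · rw [hdet, ← Int.isCoprime_iff_gcd_eq_one]
    exact (Int.isCoprime_of_modEq_one hc).mul_left (hdet_p.mul_left hdet_N).symm
  · have h0j : ((s₀ 0 j : ℤ) : ZMod N) = 0 := by
      simpa [one_apply, hj.symm] using congrFun (congrFun hs₀N 0) j
    simpa using ((ZMod.intCast_zmod_eq_zero_iff_dvd _ _).1 h0j).mul_left c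
  · rw [map_updateRow_smul_of_intCast_eq_one _ _ ?_, hs₀p]
    simpa using (ZMod.intCast_eq_intCast_iff c 1 p).2 (hc.of_mul_right N)
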